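/- For every 2×2 matrix !![a,b;c,d] over ℂ of determinant 1 and all 2×2 blocks A, B, C, D over ℂ, one has ρ(!![a,b;c,d])(π(fromBlocks A B C D)) = π(ρ(!![d,c;b,a])(fromBlocks A B C D)); that is, ρ(!![a,b;c,d]) ∘ π = π ∘ ρ(!![d,c;b,a]) on gl(2|2). -/
import Mathlib


open Matrix

/-- `Ψ(F) = J * Fᵀ * J` where `J = !![0,1;-1,0]`. -/
noncomputable def Psi (F : Matrix (Fin 2) (Fin 2) ℂ) : Matrix (Fin 2) (Fin 2) ℂ :=
  !![0, 1; -1, 0] * Fᵀ * !![0, 1; -1, 0]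

/-- The map `ρ(S)` on `gl(2|2)` for `S = !![a,b;c,d]`. -/
noncomputable def rho (S : Matrix (Fin 2) (Fin 2) ℂ)
    (M : Matrix (Fin 2 ⊕ Fin 2) (Fin 2 ⊕ Fin 2) ℂ) :
    Matrix (Fin 2 ⊕ Fin 2) (Fin 2 ⊕ Fin 2) ℂ :=
  fromBlocks M.toBlocks₁₁
    (S 0 0 • M.toBlocks₁₂ + S 0 1 • Psi M.toBlocks₂₁)
    (S 1 0 • Psi M.toBlocks₁₂ + S 1 1 • M.toBlocks₂₁)
    M.toBlocks₂₂

/-- The map `π` on `gl(2|2)`: `fromBlocks A B C D ↦ fromBlocks D C B A`. -/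
def piMap (M : Matrix (Fin 2 ⊕ Fin 2) (Fin 2 ⊕ Fin 2) ℂ) :
    Matrix (Fin 2 ⊕ Fin 2) (Fin 2 ⊕ Fin 2) ℂ :=
  fromBlocks M.toBlocks₂₂ M.toBlocks₂₁ M.toBlocks₁₂ M.toBlocks₁₁

/-- `ρ(!![a,b;c,d]) ∘ π = π ∘ ρ(!![d,c;b,a])` on `gl(2|2)`. -/
theorem rho_comp_pi (a b c d : ℂ)
    (hM : (!![a, b; c, d] : Matrix (Fin 2) (Fin 2) ℂ).det = 1)
    (A B C D : Matrix (Fin 2) (Fin 2) ℂ) :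
    rho !![a, b; c, d] (piMap (fromBlocks A B C D)) =
      piMap (rho !![d, c; b, a] (fromBlocks A B C D)) := by
  simp only [rho, piMap, toBlocks_fromBlocks₁₁, toBlocks_fromBlocks₁₂,
    toBlocks_fromBlocks₂₁, toBlocks_fromBlocks₂₂,
    show (!![a, b; c, d] : Matrix (Fin 2) (Fin 2) ℂ) 0 0 = a from rfl,
    show (!![a, b; c, d] : Matrix (Fin 2) (Fin 2) ℂ) 0 1 = b from rfl,
    show (!![a, b; c, d] : Matrix (Fin 2) (Fin 2) ℂ) 1 0 = c from rfl,
    show (!![a, b; c, d] : Matrix (Fin 2) (Fin 2) ℂ) 1 1 = d from rfl,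
    show (!![d, c; b, a] : Matrix (Fin 2) (Fin 2) ℂ) 0 0 = d from rfl,
    show (!![d, c; b, a] : Matrix (Fin 2) (Fin 2) ℂ) 0 1 = c from rfl,
    show (!![d, c; b, a] : Matrix (Fin 2) (Fin 2) ℂ) 1 0 = b from rfl,
    show (!![d, c; b, a] : Matrix (Fin 2) (Fin 2) ℂ) 1 1 = a from rfl]
  rw [add_comm (d • B), add_comm (b • Psi B)]
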